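/- For all convex bodies K, C in R^n, the mirrored concentricity inequality holds: r(K,−C) + R(K,C) ≤ (1/2)(1+s(C))·D(K,C). -/

import Mathlib

open Pointwise

/-- A convex body: compact, convex, with nonempty interior. -/
def IsBody {n : ℕ} (K : Set (Fin n → ℝ)) : Prop :=
  Convex ℝ K ∧ IsCompact K ∧ (interior K).Nonempty

/-- Circumradius of `K` w.r.t. `C`: smallest `ρ > 0` with `K` contained in a translate of `ρ • C`. -/
noncomputable def circR {n : ℕ} (K C : Set (Fin n → ℝ)) : ℝ :=
  sInf {ρ : ℝ | 0 < ρ ∧ ∃ t : Fin n → ℝ, K ⊆ t +ᵥ ρ • C}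

/-- Inradius of `K` w.r.t. `C`: largest `ρ ≥ 0` with a translate of `ρ • C` inside `K`. -/
noncomputable def inrad {n : ℕ} (K C : Set (Fin n → ℝ)) : ℝ :=
  sSup {ρ : ℝ | 0 ≤ ρ ∧ ∃ t : Fin n → ℝ, t +ᵥ ρ • C ⊆ K}

/-- Minkowski asymmetry `s(K) = R(-K, K)`. -/
noncomputable def asym {n : ℕ} (K : Set (Fin n → ℝ)) : ℝ := circR (-K) K

/-- Diameter of `K` w.r.t. `C`: twice the maximal circumradius of a segment with endpoints in `K`. -/
noncomputable def diamC {n : ℕ} (K C : Set (Fin n → ℝ)) : ℝ :=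
  sSup {d : ℝ | ∃ x ∈ K, ∃ y ∈ K, d = 2 * circR (segment ℝ x y) C}

/-- `K` is (diametrically) complete w.r.t. `C`. -/
def IsDiamComplete {n : ℕ} (K C : Set (Fin n → ℝ)) : Prop :=
  ∀ K' : Set (Fin n → ℝ), IsBody K' → K ⊂ K' → diamC K C < diamC K' C

/-- `S` is an `n`-simplex: convex hull of `n+1` affinely independent points. -/
def IsSimplexBody {n : ℕ} (S : Set (Fin n → ℝ)) : Prop :=
  ∃ p : Fin (n + 1) → (Fin n → ℝ), AffineIndependent ℝ p ∧ S = convexHull ℝ (Set.range p)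

/-- Support function of `C`. -/
noncomputable def supp {n : ℕ} (C : Set (Fin n → ℝ)) (a : Fin n → ℝ) : ℝ :=
  sSup {r : ℝ | ∃ x ∈ C, r = dotProduct a x}

/-- `A ⊆ₜ B`: `A` is contained in some translate of `B`. -/
def SubsetT {n : ℕ} (A B : Set (Fin n → ℝ)) : Prop := ∃ t : Fin n → ℝ, A ⊆ t +ᵥ B

/-!
Write `‖·‖` for the gauge of the difference body `C - C`; then `R([x, y], C) = ‖y - x‖`, so
`‖y - x‖ ≤ D / 2` on `K`. Let `-C ⊆ t + ρ C` and let `u - r C ⊆ K`. Since `C - C ⊆ t + (1 + ρ) C`,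
the body `K` contains the `‖·‖`-ball of radius `λ = r / (1 + ρ)` around `w = u + λ t`. Pushing any
`x ∈ K` away from `w` through this ball gives a chord of length `‖x - w‖ + λ`, hence
`‖x - w‖ ≤ D / 2 - λ`, and then `K ⊆ w + (D / 2 - λ) (C - C)` lies in a translate of
`(D / 2 - λ) (1 + ρ) C`. Thus `r + R(K, C) ≤ (1 + ρ) D / 2`; take the supremum over `r` and the
infimum over `ρ`.
-/

open Set Filter Topology

variable {n : ℕ}

lemma IsBody.nonempty {C : Set (Fin n → ℝ)} (hC : IsBody C) : C.Nonempty :=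
  hC.2.2.mono interior_subset

lemma IsBody.nontrivial {K : Set (Fin (n + 1) → ℝ)} (hK : IsBody K) : K.Nontrivial := by
  obtain ⟨a, ha⟩ := hK.2.2
  exact (infinite_of_mem_nhds a (mem_interior_iff_mem_nhds.1 ha)).nontrivial

lemma circR_nonneg (K C : Set (Fin n → ℝ)) : 0 ≤ circR K C :=
  Real.sInf_nonneg fun _ hρ => hρ.1.le

lemma circR_le_of_subset_vadd_smul {K C : Set (Fin n → ℝ)} {ρ : ℝ} {t : Fin n → ℝ} (hρ : 0 < ρ)
    (h : K ⊆ t +ᵥ ρ • C) : circR K C ≤ ρ :=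
  csInf_le ⟨0, fun _ hρ' => hρ'.1.le⟩ ⟨hρ, t, h⟩

lemma diamC_nonneg (K C : Set (Fin n → ℝ)) : 0 ≤ diamC K C :=
  Real.sSup_nonneg <| by
    rintro _ ⟨x, -, y, -, rfl⟩
    exact mul_nonneg zero_le_two (circR_nonneg _ _)

lemma inrad_le {K C : Set (Fin n → ℝ)} (hK : K.Nonempty) {b : ℝ}
    (h : ∀ r, 0 ≤ r → ∀ t : Fin n → ℝ, t +ᵥ r • C ⊆ K → r ≤ b) : inrad K C ≤ b := by
  obtain ⟨k, hk⟩ := hK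
  refine csSup_le ⟨0, le_rfl, k, ?_⟩ fun r ⟨hr, t, ht⟩ => h r hr t ht
  rintro _ ⟨z, hz, rfl⟩
  rw [zero_smul_set_subset C hz]
  simpa only [vadd_eq_add, add_zero] using hk

lemma circR_fin_zero (A : Set (Fin 0 → ℝ)) {C : Set (Fin 0 → ℝ)} (hC : C.Nonempty) :
    circR A C = 0 := by
  obtain ⟨c, hc⟩ := hC
  have : {ρ : ℝ | 0 < ρ ∧ ∃ t : Fin 0 → ℝ, A ⊆ t +ᵥ ρ • C} = Ioi 0 := by
    ext ρ
    exact ⟨And.left, fun hρ =>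
      ⟨hρ, 0, fun _ _ => ⟨ρ • c, smul_mem_smul_set hc, Subsingleton.elim _ _⟩⟩⟩
  rw [circR, this, csInf_Ioi]

/-- Every dilate fits into `K`, and `sSup` of a set unbounded above is `0`. -/
lemma inrad_fin_zero {K : Set (Fin 0 → ℝ)} (C : Set (Fin 0 → ℝ)) (hK : K.Nonempty) :
    inrad K C = 0 := by
  obtain ⟨k, hk⟩ := hK
  have : {ρ : ℝ | 0 ≤ ρ ∧ ∃ t : Fin 0 → ℝ, t +ᵥ ρ • C ⊆ K} = Ici 0 := by
    ext ρ
    exact ⟨And.left, fun hρ => ⟨hρ, 0, fun a _ => Subsingleton.elim k a ▸ hk⟩⟩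
  rw [inrad, this, Real.sSup_of_not_bddAbove (not_bddAbove_Ici 0)]

lemma circR_segment (C : Set (Fin n → ℝ)) (hC : Convex ℝ C) (x y : Fin n → ℝ) :
    circR (segment ℝ x y) C = gauge (C - C) (y - x) := by
  unfold circR gauge
  congr 1
  ext ρ
  refine and_congr_right fun hρ => ⟨?_, ?_⟩
  · rintro ⟨t, hsub⟩
    obtain ⟨_, ⟨c₁, hc₁, rfl⟩, hx⟩ := hsub (left_mem_segment ℝ x y)
    obtain ⟨_, ⟨c₂, hc₂, rfl⟩, hy⟩ := hsub (right_mem_segment ℝ x y)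
    refine ⟨c₂ - c₁, sub_mem_sub hc₂ hc₁, ?_⟩
    dsimp only [vadd_eq_add] at hx hy ⊢
    rw [← hx, ← hy, smul_sub]
    abel
  · rintro ⟨_, ⟨c₁, hc₁, c₂, hc₂, rfl⟩, hxy⟩
    refine ⟨x - ρ • c₂, ((hC.smul ρ).vadd _).segment_subset ?_ ?_⟩
    · exact ⟨ρ • c₂, smul_mem_smul_set hc₂, sub_add_cancel x _⟩
    · refine ⟨ρ • c₁, smul_mem_smul_set hc₁, ?_⟩
      dsimp only [vadd_eq_add] at hxy ⊢
      rw [← sub_add_cancel y x, ← hxy, smul_sub]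
      abel

lemma sub_mem_vadd_smul_of_neg_subset {C : Set (Fin n → ℝ)} (hC : Convex ℝ C) {ρ : ℝ}
    {t : Fin n → ℝ} (hρ : 0 ≤ ρ) (ht : -C ⊆ t +ᵥ ρ • C) {c₁ c₂ : Fin n → ℝ} (hc₁ : c₁ ∈ C)
    (hc₂ : c₂ ∈ C) : c₁ - c₂ ∈ t +ᵥ (1 + ρ) • C := by
  obtain ⟨_, ⟨c₃, hc₃, rfl⟩, hc₂'⟩ := ht (neg_mem_neg.2 hc₂)
  refine ⟨c₁ + ρ • c₃, ?_, ?_⟩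
  · rw [hC.add_smul zero_le_one hρ, one_smul]
    exact add_mem_add hc₁ (smul_mem_smul_set hc₃)
  · dsimp only [vadd_eq_add] at hc₂' ⊢
    rw [sub_eq_add_neg, ← hc₂']
    abel

lemma vadd_smul_sub_self_subset_of_neg_subset {C K : Set (Fin n → ℝ)} (hC : Convex ℝ C)
    {ρ : ℝ} {t : Fin n → ℝ} (hρ : 0 ≤ ρ) (ht : -C ⊆ t +ᵥ ρ • C) {r : ℝ} {u : Fin n → ℝ}
    (hu : u +ᵥ r • -C ⊆ K) : (u + (r / (1 + ρ)) • t) +ᵥ (r / (1 + ρ)) • (C - C) ⊆ K := by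
  rintro _ ⟨_, ⟨_, ⟨c₁, hc₁, c₂, hc₂, rfl⟩, rfl⟩, rfl⟩
  obtain ⟨_, ⟨c, hc, rfl⟩, hc₂₁⟩ := sub_mem_vadd_smul_of_neg_subset hC hρ ht hc₂ hc₁
  refine hu ⟨r • -c, smul_mem_smul_set (neg_mem_neg.2 hc), ?_⟩
  dsimp only [vadd_eq_add] at hc₂₁ ⊢
  rw [← neg_sub c₂ c₁, ← hc₂₁, smul_neg, smul_neg, smul_add, smul_smul,
    div_mul_cancel₀ r (by linarith : (1 + ρ) ≠ 0)]
  abel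

namespace IsBody

variable {C : Set (Fin n → ℝ)}

lemma sub_self_mem_nhds_zero (hC : IsBody C) : C - C ∈ 𝓝 0 := by
  obtain ⟨c, hc⟩ := hC.2.2
  exact mem_of_superset
    (isOpen_interior.sub_right.mem_nhds ⟨c, hc, c, interior_subset hc, sub_self c⟩)
    (sub_subset_sub interior_subset subset_rfl)

lemma isCompact_sub_self (hC : IsBody C) : IsCompact (C - C) := by
  rw [sub_eq_add_neg]
  exact hC.2.1.add hC.2.1.neg

lemma gauge_sub_self_eq_zero_iff (hC : IsBody C) {v : Fin n → ℝ} :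
    gauge (C - C) v = 0 ↔ v = 0 :=
  gauge_eq_zero (absorbent_nhds_zero hC.sub_self_mem_nhds_zero)
    (NormedSpace.isVonNBounded_of_isBounded ℝ hC.isCompact_sub_self.isBounded)

lemma gauge_sub_self_pos (hC : IsBody C) {v : Fin n → ℝ} (hv : v ≠ 0) : 0 < gauge (C - C) v :=
  (gauge_nonneg v).lt_of_ne' (hC.gauge_sub_self_eq_zero_iff.not.2 hv)

lemma mem_smul_sub_self_of_gauge_le (hC : IsBody C) {μ : ℝ} {v : Fin n → ℝ} (hμ : 0 ≤ μ)
    (hv : gauge (C - C) v ≤ μ) : v ∈ μ • (C - C) := by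
  obtain ⟨c, hc⟩ := hC.nonempty
  rcases hμ.eq_or_lt with rfl | hμ
  · rw [hC.gauge_sub_self_eq_zero_iff.1 (le_antisymm hv (gauge_nonneg v))]
    exact ⟨c - c, sub_mem_sub hc hc, zero_smul ℝ _⟩
  rw [mem_smul_set_iff_inv_smul_mem₀ hμ.ne', ← hC.isCompact_sub_self.isClosed.closure_eq,
    ← gauge_le_one_iff_mem_closure (hC.1.sub hC.1) hC.sub_self_mem_nhds_zero,
    gauge_smul_of_nonneg (inv_nonneg.2 hμ.le), smul_eq_mul]
  exact inv_mul_le_one_of_le₀ hv hμ.le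

lemma two_mul_gauge_le_diamC (hC : IsBody C) {K : Set (Fin n → ℝ)} (hK : IsCompact K)
    {x y : Fin n → ℝ} (hx : x ∈ K) (hy : y ∈ K) : 2 * gauge (C - C) (y - x) ≤ diamC K C := by
  refine le_csSup ?_ ⟨x, hx, y, hy, by rw [circR_segment C hC.1]⟩
  have hcont : Continuous fun p : (Fin n → ℝ) × (Fin n → ℝ) => 2 * gauge (C - C) (p.2 - p.1) :=
    continuous_const.mul
      ((continuous_gauge (hC.1.sub hC.1) hC.sub_self_mem_nhds_zero).comp
        (continuous_snd.sub continuous_fst))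
  obtain ⟨b, hb⟩ := (hK.prod hK).bddAbove_image hcont.continuousOn
  refine ⟨b, ?_⟩
  rintro _ ⟨x, hx, y, hy, rfl⟩
  rw [circR_segment C hC.1]
  exact hb ⟨(x, y), ⟨hx, hy⟩, rfl⟩

lemma exists_subset_vadd_smul (hC : IsBody C) {A : Set (Fin n → ℝ)}
    (hA : Bornology.IsBounded A) : ∃ ρ : ℝ, 0 < ρ ∧ ∃ t : Fin n → ℝ, A ⊆ t +ᵥ ρ • C := by
  obtain ⟨c, hc⟩ := hC.2.2
  have hnhds : -c +ᵥ C ∈ 𝓝 0 :=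
    mem_of_superset ((isOpen_interior.vadd (-c)).mem_nhds ⟨c, hc, neg_add_cancel c⟩)
      (vadd_set_mono interior_subset)
  obtain ⟨ρ, hρ, hA⟩ := (NormedSpace.isVonNBounded_of_isBounded ℝ hA hnhds).exists_pos
  refine ⟨ρ, hρ, -(ρ • c), (hA ρ (Real.le_norm_self ρ)).trans ?_⟩
  rintro _ ⟨_, ⟨c', hc', rfl⟩, rfl⟩
  refine ⟨ρ • c', smul_mem_smul_set hc', ?_⟩
  simp only [vadd_eq_add, smul_add, smul_neg]

lemma two_mul_gauge_add_le {K : Set (Fin n → ℝ)} (hC : IsBody C) {D lam : ℝ}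
    (hD : ∀ x ∈ K, ∀ y ∈ K, 2 * gauge (C - C) (y - x) ≤ D) (hlam : 0 ≤ lam)
    {w x : Fin n → ℝ} (hw : w +ᵥ lam • (C - C) ⊆ K) (hx : x ∈ K) (hxw : x ≠ w) :
    2 * (gauge (C - C) (x - w) + lam) ≤ D := by
  set g := gauge (C - C) (x - w)
  have hg : 0 < g := hC.gauge_sub_self_pos (sub_ne_zero.2 hxw)
  have hsymm : ∀ v ∈ C - C, -v ∈ C - C := by
    rintro _ ⟨c₁, hc₁, c₂, hc₂, rfl⟩
    exact ⟨c₂, hc₂, c₁, hc₁, (neg_sub c₁ c₂).symm⟩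
  have hv : -(lam / g) • (x - w) ∈ lam • (C - C) := by
    refine hC.mem_smul_sub_self_of_gauge_le hlam (le_of_eq ?_)
    rw [neg_smul, gauge_neg hsymm, gauge_smul_of_nonneg (by positivity), smul_eq_mul,
      div_mul_cancel₀ lam hg.ne']
  calc 2 * (g + lam) = 2 * gauge (C - C) ((1 + lam / g) • (x - w)) := by
        rw [gauge_smul_of_nonneg (by positivity), smul_eq_mul, add_mul, one_mul,
          div_mul_cancel₀ lam hg.ne']
    _ = 2 * gauge (C - C) (x - (w + -(lam / g) • (x - w))) := by congr 2; module
    _ ≤ D := hD _ (hw (vadd_mem_vadd_set hv)) x hx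

lemma circR_le_of_gauge_le {K : Set (Fin n → ℝ)} (hC : IsBody C) {ρ : ℝ} {t : Fin n → ℝ}
    (hρ : 0 ≤ ρ) (ht : -C ⊆ t +ᵥ ρ • C) {μ : ℝ} (hμ : 0 < μ) {w : Fin n → ℝ}
    (h : ∀ x ∈ K, gauge (C - C) (x - w) ≤ μ) : circR K C ≤ μ * (1 + ρ) := by
  refine circR_le_of_subset_vadd_smul (t := w + μ • t) (by positivity) fun x hx => ?_
  obtain ⟨_, ⟨c₁, hc₁, c₂, hc₂, rfl⟩, hxw⟩ := hC.mem_smul_sub_self_of_gauge_le hμ.le (h x hx)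
  obtain ⟨_, ⟨c, hc, rfl⟩, hc₁₂⟩ := sub_mem_vadd_smul_of_neg_subset hC.1 hρ ht hc₁ hc₂
  refine ⟨(μ * (1 + ρ)) • c, smul_mem_smul_set hc, ?_⟩
  dsimp only [vadd_eq_add] at hxw hc₁₂ ⊢
  rw [← sub_add_cancel x w, ← hxw, ← hc₁₂, smul_add, mul_smul]
  abel

lemma add_circR_le_of_neg_subset {K : Set (Fin n → ℝ)} (hC : IsBody C) (hK : K.Nontrivial)
    {D : ℝ} (hD : ∀ x ∈ K, ∀ y ∈ K, 2 * gauge (C - C) (y - x) ≤ D) {ρ : ℝ} {t : Fin n → ℝ}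
    (hρ : 0 ≤ ρ) (ht : -C ⊆ t +ᵥ ρ • C) {r : ℝ} {u : Fin n → ℝ} (hr : 0 ≤ r)
    (hu : u +ᵥ r • -C ⊆ K) : r + circR K C ≤ (1 + ρ) * (D / 2) := by
  set lam := r / (1 + ρ)
  set w := u + lam • t
  have hlam : 0 ≤ lam := by positivity
  have hw := vadd_smul_sub_self_subset_of_neg_subset hC.1 hρ ht hu
  obtain ⟨y, hy, hyw⟩ := hK.exists_ne w
  have hgauge : ∀ x ∈ K, gauge (C - C) (x - w) ≤ D / 2 - lam := by
    intro x hx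
    rcases eq_or_ne x w with rfl | hxw
    · rw [sub_self, gauge_zero]
      linarith [gauge_nonneg (s := C - C) (y - w), two_mul_gauge_add_le hC hD hlam hw hy hyw]
    · linarith [two_mul_gauge_add_le hC hD hlam hw hx hxw]
  have hμ : 0 < D / 2 - lam := (hC.gauge_sub_self_pos (sub_ne_zero.2 hyw)).trans_le (hgauge y hy)
  calc r + circR K C ≤ r + (D / 2 - lam) * (1 + ρ) :=
        add_le_add_right (hC.circR_le_of_gauge_le hρ ht hμ hgauge) r
    _ = (1 + ρ) * (D / 2) := by
        simp only [lam]
        field_simp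
        ring

end IsBody

lemma le_one_add_sInf_mul {S : Set ℝ} (hS : S.Nonempty) {a d : ℝ} (hd : 0 ≤ d)
    (h : ∀ ρ ∈ S, a ≤ (1 + ρ) * d) : a ≤ (1 + sInf S) * d := by
  have : a - d ≤ sInf (d • S) := by
    refine le_csInf hS.smul_set ?_
    rintro _ ⟨ρ, hρ, rfl⟩
    linarith [h ρ hρ, smul_eq_mul d ρ]
  rw [Real.sInf_smul_of_nonneg hd, smul_eq_mul] at this
  linarith

theorem stmt7 {n : ℕ} (K C : Set (Fin n → ℝ)) (hK : IsBody K) (hC : IsBody C) :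
    inrad K (-C) + circR K C ≤ (1 / 2) * (1 + asym C) * diamC K C := by
  cases n with
  | zero =>
    rw [inrad_fin_zero _ hK.nonempty, circR_fin_zero _ hC.nonempty, asym,
      circR_fin_zero _ hC.nonempty]
    linarith [diamC_nonneg K C]
  | succ n =>
    have hbound : ∀ ρ ∈ {ρ : ℝ | 0 < ρ ∧ ∃ t : Fin (n + 1) → ℝ, -C ⊆ t +ᵥ ρ • C},
        inrad K (-C) + circR K C ≤ (1 + ρ) * (diamC K C / 2) := by
      rintro ρ ⟨hρ, t, ht⟩
      have := inrad_le hK.nonempty fun r hr u hu => le_sub_iff_add_le.2 <|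
        hC.add_circR_le_of_neg_subset hK.nontrivial
          (fun _ hx _ hy => hC.two_mul_gauge_le_diamC hK.2.1 hx hy) hρ.le ht hr hu
      linarith
    calc inrad K (-C) + circR K C
        ≤ (1 + asym C) * (diamC K C / 2) :=
          le_one_add_sInf_mul (hC.exists_subset_vadd_smul hC.2.1.isBounded.neg)
            (div_nonneg (diamC_nonneg K C) zero_le_two) hbound
      _ = 1 / 2 * (1 + asym C) * diamC K C := by ring
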